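/- On the middle-third Cantor set CS with Cantor function c, the pairs (x, c), (x², c) and (x³, c) are integrable, and φ(x, c) = 1, φ(x², c) = 3/4, φ(x³, c) = 5/8; that is, lim_{n→∞} 2^{−n} ∑_{𝐬∈{0,1}^n} (a_𝐬 + b_𝐬) = 1, lim_{n→∞} 2^{−n} ∑_{𝐬∈{0,1}^n} (a_𝐬² + b_𝐬²) = 3/4, and lim_{n→∞} 2^{−n} ∑_{𝐬∈{0,1}^n} (a_𝐬³ + b_𝐬³) = 5/8. -/

import Mathlib

open Filter Topology

/-- `a_s = ∑_{i=1}^n 2 s_i/3^i` for a word `s ∈ {0,1}^n`. -/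
noncomputable def aPt {n : ℕ} (s : Fin n → Fin 2) : ℝ :=
  ∑ i : Fin n, 2 * ((s i : ℕ) : ℝ) / 3 ^ ((i : ℕ) + 1)

/-- `b_s = a_s + 1/3^n`. -/
noncomputable def bPt {n : ℕ} (s : Fin n → Fin 2) : ℝ := aPt s + 1 / 3 ^ n

/-- Value of the Cantor function at `a_s`. -/
noncomputable def cA {n : ℕ} (s : Fin n → Fin 2) : ℝ :=
  ∑ i : Fin n, ((s i : ℕ) : ℝ) / 2 ^ ((i : ℕ) + 1)

/-- Value of the Cantor function at `b_s`. -/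
noncomputable def cB {n : ℕ} (s : Fin n → Fin 2) : ℝ := cA s + 1 / 2 ^ n

/-- `φ_n(x^m, c) = ∑_{s ∈ {0,1}^n} (a_s^m + b_s^m)·(c(b_s) − c(a_s))`. -/
noncomputable def phiM (m n : ℕ) : ℝ :=
  ∑ s : Fin n → Fin 2, ((aPt s) ^ m + (bPt s) ^ m) * (cB s - cA s)

/-! The level-`n+1` intervals `[a_s, b_s]` are the images of the level-`n` ones under
`x ↦ x/3` and `x ↦ (x+2)/3`. So the endpoint power sums `E_m(n) = ∑_s (a_s^m + b_s^m)` obey a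
linear recursion expressing `E_m(n+1)` through `E_0(n), …, E_m(n)`; solving it for `m ≤ 3` gives
`E_m(n) = c_m 2^n + d_m (2/9)^n`, and the weight `c(b_s) - c(a_s) = 2^{-n}` leaves `c_m` in the
limit. -/

lemma aPt_cons {n : ℕ} (x : Fin 2) (s : Fin n → Fin 2) :
    aPt (Fin.cons x s : Fin (n + 1) → Fin 2) = (2 * x + aPt s) / 3 := by
  rw [aPt, aPt, Fin.sum_univ_succ, add_div, Finset.sum_div]
  simp only [Fin.cons_zero, Fin.cons_succ, Fin.val_succ, Fin.val_zero, pow_succ]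
  congr 1
  · ring
  · exact Finset.sum_congr rfl fun i _ => by ring

lemma bPt_cons {n : ℕ} (x : Fin 2) (s : Fin n → Fin 2) :
    bPt (Fin.cons x s : Fin (n + 1) → Fin 2) = (2 * x + bPt s) / 3 := by
  rw [bPt, bPt, aPt_cons, pow_succ]
  ring

lemma sum_endpoints_succ {M : Type*} [AddCommMonoid M] {n : ℕ} (g : ℝ → ℝ → M) :
    ∑ s : Fin (n + 1) → Fin 2, g (aPt s) (bPt s) =
      ∑ s : Fin n → Fin 2, (g (aPt s / 3) (bPt s / 3) + g ((2 + aPt s) / 3) ((2 + bPt s) / 3)) := by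
  rw [← (Fin.consEquiv fun _ => Fin 2).sum_comp, Fintype.sum_prod_type, Fin.sum_univ_two,
    ← Finset.sum_add_distrib]
  simp [Fin.consEquiv, aPt_cons, bPt_cons]

lemma sum_const_words {n : ℕ} (c : ℝ) : ∑ _s : Fin n → Fin 2, c = 2 ^ n * c := by
  simp

lemma sum_endpoints_pow_one (n : ℕ) : ∑ s : Fin n → Fin 2, (aPt s + bPt s) = 2 ^ n := by
  induction n with
  | zero => simp [aPt, bPt]
  | succ n ih =>
    have h : ∀ a b : ℝ, a / 3 + b / 3 + ((2 + a) / 3 + (2 + b) / 3) = 2 / 3 * (a + b) + 4 / 3 :=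
      fun a b => by ring
    rw [sum_endpoints_succ fun a b => a + b]
    simp only [h]
    rw [Finset.sum_add_distrib, ← Finset.mul_sum, ih, sum_const_words]
    ring

lemma sum_endpoints_pow_two (n : ℕ) :
    ∑ s : Fin n → Fin 2, (aPt s ^ 2 + bPt s ^ 2) = 3 / 4 * 2 ^ n + 1 / 4 * (2 / 9) ^ n := by
  induction n with
  | zero => norm_num [aPt, bPt]
  | succ n ih =>
    have h : ∀ a b : ℝ, (a / 3) ^ 2 + (b / 3) ^ 2 + (((2 + a) / 3) ^ 2 + ((2 + b) / 3) ^ 2) =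
        2 / 9 * (a ^ 2 + b ^ 2) + 4 / 9 * (a + b) + 8 / 9 := fun a b => by ring
    rw [sum_endpoints_succ fun a b => a ^ 2 + b ^ 2]
    simp only [h]
    rw [Finset.sum_add_distrib, Finset.sum_add_distrib, ← Finset.mul_sum, ← Finset.mul_sum, ih,
      sum_endpoints_pow_one, sum_const_words]
    ring

lemma sum_endpoints_pow_three (n : ℕ) :
    ∑ s : Fin n → Fin 2, (aPt s ^ 3 + bPt s ^ 3) = 5 / 8 * 2 ^ n + 3 / 8 * (2 / 9) ^ n := by
  induction n with
  | zero => norm_num [aPt, bPt]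
  | succ n ih =>
    have h : ∀ a b : ℝ, (a / 3) ^ 3 + (b / 3) ^ 3 + (((2 + a) / 3) ^ 3 + ((2 + b) / 3) ^ 3) =
        2 / 27 * (a ^ 3 + b ^ 3) + 6 / 27 * (a ^ 2 + b ^ 2) + 12 / 27 * (a + b) + 16 / 27 :=
      fun a b => by ring
    rw [sum_endpoints_succ fun a b => a ^ 3 + b ^ 3]
    simp only [h]
    rw [Finset.sum_add_distrib, Finset.sum_add_distrib, Finset.sum_add_distrib, ← Finset.mul_sum,
      ← Finset.mul_sum, ← Finset.mul_sum, ih, sum_endpoints_pow_two, sum_endpoints_pow_one,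
      sum_const_words]
    ring

lemma phiM_eq_half_pow_mul_sum (m n : ℕ) :
    phiM m n = (1 / 2) ^ n * ∑ s : Fin n → Fin 2, (aPt s ^ m + bPt s ^ m) := by
  simp only [phiM, cB, add_sub_cancel_left, ← Finset.sum_mul, one_div_pow]
  ring

lemma tendsto_half_pow_mul (c d : ℝ) :
    Tendsto (fun n : ℕ => (1 / 2 : ℝ) ^ n * (c * 2 ^ n + d * (2 / 9) ^ n)) atTop (𝓝 c) := by
  have h : ∀ n : ℕ, (1 / 2 : ℝ) ^ n * (c * 2 ^ n + d * (2 / 9) ^ n) = c + d * (1 / 9) ^ n :=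
    fun n => by rw [mul_add, mul_left_comm, mul_left_comm _ d, ← mul_pow, ← mul_pow]; norm_num
  simp only [h]
  simpa using ((tendsto_pow_atTop_nhds_zero_of_lt_one (by norm_num : (0 : ℝ) ≤ 1 / 9)
    (by norm_num)).const_mul d).const_add c

/-- On the middle-third Cantor set, `(x,c)`, `(x²,c)`, `(x³,c)` are integrable with
`φ(x,c) = 1`, `φ(x²,c) = 3/4`, `φ(x³,c) = 5/8`; that is, the scaled endpoint power
sums `2^{−n} ∑_s (a_s^m + b_s^m)` converge to these values for `m = 1, 2, 3`. -/
theorem phi_x_x2_x3_cantor :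
    (Tendsto (phiM 1) atTop (nhds 1) ∧
      Tendsto (fun n : ℕ => (1 / 2 : ℝ) ^ n * ∑ s : Fin n → Fin 2, (aPt s + bPt s))
        atTop (nhds 1)) ∧
    (Tendsto (phiM 2) atTop (nhds (3 / 4)) ∧
      Tendsto (fun n : ℕ => (1 / 2 : ℝ) ^ n * ∑ s : Fin n → Fin 2, (aPt s ^ 2 + bPt s ^ 2))
        atTop (nhds (3 / 4))) ∧
    (Tendsto (phiM 3) atTop (nhds (5 / 8)) ∧
      Tendsto (fun n : ℕ => (1 / 2 : ℝ) ^ n * ∑ s : Fin n → Fin 2, (aPt s ^ 3 + bPt s ^ 3))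
        atTop (nhds (5 / 8))) := by
  have hphi : ∀ m, phiM m = fun n => (1 / 2) ^ n * ∑ s : Fin n → Fin 2, (aPt s ^ m + bPt s ^ m) :=
    fun m => funext (phiM_eq_half_pow_mul_sum m)
  have h1 : Tendsto (fun n : ℕ => (1 / 2 : ℝ) ^ n * ∑ s : Fin n → Fin 2, (aPt s + bPt s))
      atTop (𝓝 1) :=
    tendsto_const_nhds.congr fun n => by rw [sum_endpoints_pow_one, ← mul_pow]; norm_num
  have h2 := tendsto_half_pow_mul (3 / 4) (1 / 4)
  have h3 := tendsto_half_pow_mul (5 / 8) (3 / 8)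
  simp only [← sum_endpoints_pow_two, ← sum_endpoints_pow_three] at h2 h3
  refine ⟨⟨?_, h1⟩, ⟨?_, h2⟩, ⟨?_, h3⟩⟩
  · simpa only [hphi, pow_one] using h1
  · rwa [hphi]
  · rwa [hphi]
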